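/- arXiv:1503.08289 — 5 statements merged into one kernel-verified Lean document; each statement's English description precedes it below -/
import Mathlib

section
/- Koczkodaj's index K is not strictly monotone with respect to the triad-wise inconsistencies φ: for every n ≥ 4 there exist pairwise comparison matrices A and B of order n such that φ(a_ij, a_jk, a_ik) ≤ φ(b_ij, b_jk, b_ik) for every triad i < j < k, with strict inequality for at least one triad, and yet K(A) = K(B). -/
/-- A pairwise comparison matrix: positive entries with `a_ij * a_ji = 1`. -/
def IsPCM {n : ℕ} (A : Matrix (Fin n) (Fin n) ℝ) : Prop :=
  (∀ i j, 0 < A i j) ∧ (∀ i j, A i j * A j i = 1)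

/-- Local inconsistency of a triad `(x, y, z)`:
`φ(x, y, z) = min(|1 − z/(x·y)|, |1 − (x·y)/z|)`. -/
noncomputable def phi (x y z : ℝ) : ℝ :=
  min |1 - z / (x * y)| |1 - (x * y) / z|

/-- Koczkodaj's inconsistency index: the maximum of `φ` over all triads `i < j < k`. -/
noncomputable def Kindex {n : ℕ} (A : Matrix (Fin n) (Fin n) ℝ) : ℝ :=
  ⨆ t : {p : Fin n × Fin n × Fin n // p.1 < p.2.1 ∧ p.2.1 < p.2.2},
    phi (A t.1.1 t.1.2.1) (A t.1.2.1 t.1.2.2) (A t.1.1 t.1.2.2)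

noncomputable def Amat (n : ℕ) : Matrix (Fin n) (Fin n) ℝ := fun i j =>
  if (i : ℕ) = 0 ∧ (j : ℕ) = 1 then 2
  else if (i : ℕ) = 1 ∧ (j : ℕ) = 0 then 2⁻¹ else 1

noncomputable def Bmat (n : ℕ) : Matrix (Fin n) (Fin n) ℝ := fun i j =>
  if ((i : ℕ) = 0 ∧ (j : ℕ) = 1) ∨ ((i : ℕ) = 2 ∧ (j : ℕ) = 3) then 2
  else if ((i : ℕ) = 1 ∧ (j : ℕ) = 0) ∨ ((i : ℕ) = 3 ∧ (j : ℕ) = 2) then 2⁻¹ else 1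

lemma phi_nonneg (x y z : ℝ) : 0 ≤ phi x y z := le_min (abs_nonneg _) (abs_nonneg _)
lemma phi_211 : phi 2 1 1 = 1/2 := by norm_num [phi, abs]
lemma phi_121 : phi 1 2 1 = 1/2 := by norm_num [phi, abs]
lemma phi_111 : phi 1 1 1 = 0 := by norm_num [phi]

lemma Amat_pcm (n : ℕ) : IsPCM (Amat n) := by
  constructor <;> intro i j <;> simp only [Amat] <;> split_ifs <;> first | (exfalso; omega) | norm_num

lemma Bmat_pcm (n : ℕ) : IsPCM (Bmat n) := by
  constructor <;> intro i j <;> simp only [Bmat] <;> split_ifs <;> first | (exfalso; omega) | norm_num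

lemma valA (n : ℕ) (i j k : Fin n) (hij : (i:ℕ) < (j:ℕ)) (hjk : (j:ℕ) < (k:ℕ)) :
    phi (Amat n i j) (Amat n j k) (Amat n i k)
      = if (i:ℕ) = 0 ∧ (j:ℕ) = 1 then 1/2 else 0 := by
  have h1 : Amat n j k = 1 := by
    simp only [Amat]; rw [if_neg (by omega), if_neg (by omega)]
  have h2 : Amat n i k = 1 := by
    simp only [Amat]; rw [if_neg (by omega), if_neg (by omega)]
  rw [h1, h2]
  by_cases h : (i:ℕ) = 0 ∧ (j:ℕ) = 1
  · have h3 : Amat n i j = 2 := by simp only [Amat]; rw [if_pos h]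
    rw [h3, if_pos h, phi_211]
  · have h3 : Amat n i j = 1 := by simp only [Amat]; rw [if_neg h, if_neg (by omega)]
    rw [h3, if_neg h, phi_111]

lemma valB (n : ℕ) (i j k : Fin n) (hij : (i:ℕ) < (j:ℕ)) (hjk : (j:ℕ) < (k:ℕ)) :
    phi (Bmat n i j) (Bmat n j k) (Bmat n i k)
      = if ((i:ℕ) = 0 ∧ (j:ℕ) = 1) ∨ ((i:ℕ) = 2 ∧ (j:ℕ) = 3) ∨ ((j:ℕ) = 2 ∧ (k:ℕ) = 3)
        then 1/2 else 0 := by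
  have hz : Bmat n i k = 1 := by
    simp only [Bmat]; rw [if_neg (by omega), if_neg (by omega)]
  rw [hz]
  by_cases hx : ((i:ℕ) = 0 ∧ (j:ℕ) = 1) ∨ ((i:ℕ) = 2 ∧ (j:ℕ) = 3)
  · have hX : Bmat n i j = 2 := by simp only [Bmat]; rw [if_pos hx]
    have hY : Bmat n j k = 1 := by
      simp only [Bmat]; rw [if_neg (by omega), if_neg (by omega)]
    rw [hX, hY, if_pos (by tauto), phi_211]
  · by_cases hy : (j:ℕ) = 2 ∧ (k:ℕ) = 3
    · have hX : Bmat n i j = 1 := by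
        simp only [Bmat]; rw [if_neg hx, if_neg (by omega)]
      have hY : Bmat n j k = 2 := by simp only [Bmat]; rw [if_pos (Or.inr hy)]
      rw [hX, hY, if_pos (by tauto), phi_121]
    · have hX : Bmat n i j = 1 := by
        simp only [Bmat]; rw [if_neg hx, if_neg (by omega)]
      have hY : Bmat n j k = 1 := by
        simp only [Bmat]; rw [if_neg (by omega), if_neg (by omega)]
      rw [hX, hY, if_neg (by tauto), phi_111]

/-- Koczkodaj's index `K` is not strictly monotone with respect to the triad-wise
inconsistencies `φ`: for every `n ≥ 4` there are pairwise comparison matrices `A` and `B`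
of order `n` with `φ`-values of `A` pointwise ≤ those of `B`, strictly smaller on at
least one triad, and yet `K(A) = K(B)`. -/
theorem Kindex_not_strictly_monotone (n : ℕ) (hn : 4 ≤ n) :
    ∃ A B : Matrix (Fin n) (Fin n) ℝ, IsPCM A ∧ IsPCM B ∧
      (∀ i j k : Fin n, i < j → j < k →
        phi (A i j) (A j k) (A i k) ≤ phi (B i j) (B j k) (B i k)) ∧
      (∃ i j k : Fin n, i < j ∧ j < k ∧
        phi (A i j) (A j k) (A i k) < phi (B i j) (B j k) (B i k)) ∧
      Kindex A = Kindex B := by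
  refine ⟨Amat n, Bmat n, Amat_pcm n, Bmat_pcm n, ?_, ?_, ?_⟩
  · intro i j k hij hjk
    rw [valA n i j k (Fin.lt_def.mp hij) (Fin.lt_def.mp hjk),
        valB n i j k (Fin.lt_def.mp hij) (Fin.lt_def.mp hjk)]
    split_ifs <;> first | (exfalso; tauto) | norm_num
  · refine ⟨⟨0, by omega⟩, ⟨2, by omega⟩, ⟨3, by omega⟩, Fin.mk_lt_mk.mpr (by omega),
      Fin.mk_lt_mk.mpr (by omega), ?_⟩
    rw [valA n _ _ _ (show (0:ℕ) < 2 by omega) (show (2:ℕ) < 3 by omega),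
        valB n _ _ _ (show (0:ℕ) < 2 by omega) (show (2:ℕ) < 3 by omega)]
    rw [if_neg (show ¬((0:ℕ) = 0 ∧ (2:ℕ) = 1) by omega),
        if_pos (show ((0:ℕ) = 0 ∧ (2:ℕ) = 1) ∨ ((0:ℕ) = 2 ∧ (2:ℕ) = 3) ∨ ((2:ℕ) = 2 ∧ (3:ℕ) = 3)
          from Or.inr (Or.inr ⟨rfl, rfl⟩))]
    norm_num
  · have t0 : {p : Fin n × Fin n × Fin n // p.1 < p.2.1 ∧ p.2.1 < p.2.2} :=
      ⟨(⟨0, by omega⟩, ⟨1, by omega⟩, ⟨2, by omega⟩),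
        Fin.mk_lt_mk.mpr (by omega), Fin.mk_lt_mk.mpr (by omega)⟩
    haveI : Nonempty {p : Fin n × Fin n × Fin n // p.1 < p.2.1 ∧ p.2.1 < p.2.2} := ⟨t0⟩
    have hbA : ∀ t : {p : Fin n × Fin n × Fin n // p.1 < p.2.1 ∧ p.2.1 < p.2.2},
        phi (Amat n t.1.1 t.1.2.1) (Amat n t.1.2.1 t.1.2.2) (Amat n t.1.1 t.1.2.2) ≤ 1/2 := by
      intro t
      rw [valA n _ _ _ (Fin.lt_def.mp t.2.1) (Fin.lt_def.mp t.2.2)]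
      split_ifs <;> norm_num
    have hbB : ∀ t : {p : Fin n × Fin n × Fin n // p.1 < p.2.1 ∧ p.2.1 < p.2.2},
        phi (Bmat n t.1.1 t.1.2.1) (Bmat n t.1.2.1 t.1.2.2) (Bmat n t.1.1 t.1.2.2) ≤ 1/2 := by
      intro t
      rw [valB n _ _ _ (Fin.lt_def.mp t.2.1) (Fin.lt_def.mp t.2.2)]
      split_ifs <;> norm_num
    have hA : Kindex (Amat n) = 1/2 := by
      refine le_antisymm (ciSup_le hbA) ?_
      refine le_ciSup_of_le ⟨1/2, ?_⟩
        ⟨(⟨0, by omega⟩, ⟨1, by omega⟩, ⟨2, by omega⟩),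
          Fin.mk_lt_mk.mpr (by omega), Fin.mk_lt_mk.mpr (by omega)⟩ ?_
      · rintro x ⟨t, rfl⟩; exact hbA t
      · rw [valA n _ _ _ (show (0:ℕ) < 1 by omega) (show (1:ℕ) < 2 by omega),
            if_pos (show ((0:ℕ) = 0 ∧ (1:ℕ) = 1) from ⟨rfl, rfl⟩)]
    have hB : Kindex (Bmat n) = 1/2 := by
      refine le_antisymm (ciSup_le hbB) ?_
      refine le_ciSup_of_le ⟨1/2, ?_⟩
        ⟨(⟨0, by omega⟩, ⟨1, by omega⟩, ⟨2, by omega⟩),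
          Fin.mk_lt_mk.mpr (by omega), Fin.mk_lt_mk.mpr (by omega)⟩ ?_
      · rintro x ⟨t, rfl⟩; exact hbB t
      · rw [valB n _ _ _ (show (0:ℕ) < 1 by omega) (show (1:ℕ) < 2 by omega),
            if_pos (Or.inl (show ((0:ℕ) = 0 ∧ (1:ℕ) = 1) from ⟨rfl, rfl⟩))]
    rw [hA, hB]
end

section
/- Let A be a 3×3 pairwise comparison matrix and set c = a_13 / (a_12 · a_23). Then λ = 1 + c^{1/3} + c^{−1/3} is an eigenvalue of A (viewed as a complex matrix), and every complex eigenvalue μ of A satisfies |μ| ≤ λ; that is, λ is the Perron (maximal-modulus) eigenvalue of A. -/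
namespace IsPCM

variable {n : ℕ} {A : Matrix (Fin n) (Fin n) ℝ}

theorem apply_self (hA : IsPCM A) (i : Fin n) : A i i = 1 :=
  (mul_self_eq_one_iff.mp (hA.2 i i)).resolve_right (by linarith [hA.1 i i])

theorem apply_swap (hA : IsPCM A) (i j : Fin n) : A j i = (A i j)⁻¹ :=
  eq_inv_of_mul_eq_one_right (hA.2 i j)

end IsPCM

theorem IsPCM.mem_spectrum_iff {A : Matrix (Fin 3) (Fin 3) ℝ} (hA : IsPCM A) (μ : ℂ) :
    μ ∈ spectrum ℂ (A.map Complex.ofReal) ↔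
      (μ - 1) ^ 3 - 3 * (μ - 1) =
        ((A 0 2 / (A 0 1 * A 1 2) + (A 0 2 / (A 0 1 * A 1 2))⁻¹ : ℝ) : ℂ) := by
  have h01 : (A 0 1 : ℂ) ≠ 0 := by exact_mod_cast (hA.1 0 1).ne'
  have h02 : (A 0 2 : ℂ) ≠ 0 := by exact_mod_cast (hA.1 0 2).ne'
  have h12 : (A 1 2 : ℂ) ≠ 0 := by exact_mod_cast (hA.1 1 2).ne'
  rw [Matrix.mem_spectrum_iff_isRoot_charpoly, Polynomial.IsRoot.def, Matrix.eval_charpoly,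
    ← sub_eq_zero (a := (μ - 1) ^ 3 - 3 * (μ - 1))]
  convert Iff.rfl using 2
  simp [Matrix.det_fin_three, hA.apply_self, hA.apply_swap 0 1, hA.apply_swap 0 2,
    hA.apply_swap 1 2]
  field_simp
  ring

theorem Complex.norm_le_of_sq_add_mul_add_eq_zero {s : ℝ} (hs : 2 ≤ s) {x : ℂ}
    (hx : x ^ 2 + s * x + s ^ 2 - 3 = 0) : ‖x‖ ≤ s := by
  have hre : x.re ^ 2 - x.im ^ 2 + s * x.re + s ^ 2 - 3 = 0 := by
    simpa [pow_two] using congrArg Complex.re hx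
  have him : x.im * (2 * x.re + s) = 0 := by
    linear_combination (by simpa [pow_two] using congrArg Complex.im hx : _ = _)
  have hsq : (2 * x.re + s) ^ 2 = 4 * x.im ^ 2 + 12 - 3 * s ^ 2 := by linear_combination 4 * hre
  have hcenter : 2 * x.re + s = 0 := by
    rcases mul_eq_zero.mp him with hreal | hcenter
    · rw [hreal] at hsq
      exact pow_eq_zero_iff two_ne_zero |>.mp (le_antisymm (by nlinarith) (sq_nonneg _))
    · exact hcenter
  have hnormSq : ‖x‖ ^ 2 = s ^ 2 - 3 := by
    rw [Complex.sq_norm, Complex.normSq_apply]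
    nlinarith
  nlinarith [norm_nonneg x]

theorem Complex.norm_le_of_cube_sub_eq {s : ℝ} (hs : 2 ≤ s) {x : ℂ}
    (hx : x ^ 3 - 3 * x = s ^ 3 - 3 * s) : ‖x‖ ≤ s := by
  have hfactor : (x - s) * (x ^ 2 + s * x + s ^ 2 - 3) = 0 := by linear_combination hx
  rcases mul_eq_zero.mp hfactor with hroot | hroot
  · rw [sub_eq_zero.mp hroot, Complex.norm_real, Real.norm_of_nonneg (by linarith)]
  · exact norm_le_of_sq_add_mul_add_eq_zero hs hroot

theorem two_le_add_inv {t : ℝ} (ht : 0 < t) : 2 ≤ t + t⁻¹ := by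
  have h := mul_inv_cancel₀ ht.ne'
  nlinarith [mul_nonneg (sq_nonneg (t - 1)) (inv_pos.2 ht).le]

theorem add_inv_pow_three_sub {K : Type*} [Field K] {t : K} (ht : t ≠ 0) :
    (t + t⁻¹) ^ 3 - 3 * (t + t⁻¹) = t ^ 3 + (t ^ 3)⁻¹ := by
  field_simp
  ring

/-- For a `3 × 3` pairwise comparison matrix `A`, with `c = a₁₃/(a₁₂·a₂₃)`, the real
number `λ = 1 + c^(1/3) + c^(-1/3)` is an eigenvalue of `A` (viewed as a complex
matrix), and every complex eigenvalue `μ` of `A` satisfies `|μ| ≤ λ`; that is, `λ` is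
the Perron (maximal-modulus) eigenvalue of `A`. -/
theorem perron_eigenvalue_of_3x3_PCM (A : Matrix (Fin 3) (Fin 3) ℝ) (hA : IsPCM A) :
    let c : ℝ := A 0 2 / (A 0 1 * A 1 2)
    let lam : ℝ := 1 + c ^ ((1 : ℝ) / 3) + c ^ (-(1 : ℝ) / 3)
    (lam : ℂ) ∈ spectrum ℂ (A.map (Complex.ofReal)) ∧
      ∀ μ ∈ spectrum ℂ (A.map (Complex.ofReal)), ‖μ‖ ≤ lam := by
  intro c lam
  have hc : 0 < c := div_pos (hA.1 0 2) (mul_pos (hA.1 0 1) (hA.1 1 2))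
  set t := c ^ ((1 : ℝ) / 3)
  have ht : 0 < t := by positivity
  have hlam : lam = 1 + (t + t⁻¹) := by
    show 1 + t + c ^ (-(1 : ℝ) / 3) = _
    rw [neg_div, Real.rpow_neg hc.le, add_assoc]
  have hcube : (t + t⁻¹) ^ 3 - 3 * (t + t⁻¹) = c + c⁻¹ := by
    rw [add_inv_pow_three_sub ht.ne', ← Real.rpow_natCast, ← Real.rpow_mul hc.le]
    norm_num
  have hspec : ∀ μ : ℂ, μ ∈ spectrum ℂ (A.map Complex.ofReal) ↔
      (μ - 1) ^ 3 - 3 * (μ - 1) = ((c + c⁻¹ : ℝ) : ℂ) := hA.mem_spectrum_iff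
  refine ⟨(hspec _).2 ?_, fun μ hμ ↦ ?_⟩
  · rw [hlam, ← hcube]
    push_cast
    ring
  · have hμ' : (μ - 1) ^ 3 - 3 * (μ - 1) =
        ((t + t⁻¹ : ℝ) : ℂ) ^ 3 - 3 * ((t + t⁻¹ : ℝ) : ℂ) := by
      rw [(hspec μ).1 hμ, ← hcube]
      push_cast
      ring
    calc ‖μ‖ = ‖1 + (μ - 1)‖ := by ring_nf
      _ ≤ 1 + ‖μ - 1‖ := by simpa using norm_add_le 1 (μ - 1)
      _ ≤ 1 + (t + t⁻¹) := by
        gcongr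
        exact Complex.norm_le_of_cube_sub_eq (two_le_add_inv ht) hμ'
      _ = lam := hlam.symm
end

section
/- Let A be an n×n pairwise comparison matrix (n ≥ 1), viewed as a complex matrix, and let ρ(A) denote its spectral radius (the maximum modulus of its complex eigenvalues). Then ρ(A) ≥ n, and ρ(A) = n if and only if A is consistent (i.e., a_ik = a_ij · a_jk for all i, j, k). Consequently Saaty's Consistency Index CI(A) = (ρ(A) − n)/(n − 1) is nonnegative for n ≥ 2 and vanishes exactly on consistent matrices. -/
/-- A pairwise comparison matrix is consistent: `a_ik = a_ij · a_jk` for all `i, j, k`. -/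
def IsConsistent {n : ℕ} (A : Matrix (Fin n) (Fin n) ℝ) : Prop :=
  ∀ i j k, A i k = A i j * A j k

/-- The spectral radius of a real matrix: the maximum modulus of its complex
eigenvalues. -/
noncomputable def specRad {n : ℕ} (A : Matrix (Fin n) (Fin n) ℝ) : ℝ :=
  sSup ((fun z : ℂ => ‖z‖) '' spectrum ℂ (A.map Complex.ofReal))

/-! For a nonnegative matrix `M` and a positive vector `w`, the bounds `r w ≤ M w` and
`M w ≤ r w` give `r ≤ ρ(M)` and `ρ(M) ≤ r` (Collatz–Wielandt): conjugating by `diag w` turns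
them into row-sum bounds, and row sums bound `ρ` from above through the `ℓ∞` operator norm and
from below through Gelfand's formula `ρ(M) = lim ‖M ^ k‖ ^ (1 / k)`.

For a pairwise comparison matrix `A` take for `w` the row geometric means. Every row of
`diag(w)⁻¹ A diag(w)` then has product `1` (reciprocity makes `∑ᵢⱼ log aᵢⱼ = 0`), so by AM–GM it
sums to at least `n`, i.e. `n w ≤ A w`; equality in every row forces `aᵢⱼ = wᵢ / wⱼ`, which is
consistency. If the inequality is strict in one row, positivity of `A` makes `u = A w` satisfy
`n u < A u` in every row, hence `n < ρ(A)`. Conversely a consistent `A` satisfies `A c = n c`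
for each of its columns `c`, hence `ρ(A) ≤ n`. -/

open Matrix Filter

attribute [local instance] Matrix.linftyOpNormedRing Matrix.linftyOpNormedAlgebra

theorem card_le_sum_of_sum_log_eq_zero {ι : Type*} [Fintype ι] {x : ι → ℝ}
    (hx : ∀ i, 0 < x i) (hlog : ∑ i, Real.log (x i) = 0) :
    (Fintype.card ι : ℝ) ≤ ∑ i, x i := by
  have : ∑ i, Real.log (x i) ≤ ∑ i, (x i - 1) :=
    Finset.sum_le_sum fun i _ => Real.log_le_sub_one_of_pos (hx i)
  simp only [Finset.sum_sub_distrib, Finset.sum_const, Finset.card_univ, nsmul_one] at this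
  linarith

theorem card_lt_sum_of_sum_log_eq_zero {ι : Type*} [Fintype ι] {x : ι → ℝ}
    (hx : ∀ i, 0 < x i) (hlog : ∑ i, Real.log (x i) = 0) (hne : ∃ i, x i ≠ 1) :
    (Fintype.card ι : ℝ) < ∑ i, x i := by
  obtain ⟨i₀, hi₀⟩ := hne
  have : ∑ i, Real.log (x i) < ∑ i, (x i - 1) :=
    Finset.sum_lt_sum (fun i _ => Real.log_le_sub_one_of_pos (hx i))
      ⟨i₀, Finset.mem_univ _, Real.log_lt_sub_one_of_pos (hx i₀) hi₀⟩
  simp only [Finset.sum_sub_distrib, Finset.sum_const, Finset.card_univ, nsmul_one] at this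
  linarith

theorem ofReal_le_spectralRadius_of_pow_le_norm_pow {A : Type*} [NormedRing A]
    [NormedAlgebra ℂ A] [CompleteSpace A] {a : A} {r : ℝ} (hr : 0 ≤ r)
    (h : ∀ k : ℕ, r ^ k ≤ ‖a ^ k‖) : ENNReal.ofReal r ≤ spectralRadius ℂ a := by
  refine ge_of_tendsto (spectrum.pow_nnnorm_pow_one_div_tendsto_nhds_spectralRadius a) ?_
  filter_upwards [eventually_ne_atTop 0] with k hk
  have hpow : ENNReal.ofReal r ^ k ≤ ‖a ^ k‖₊ := by
    rw [← ENNReal.ofReal_pow hr, ← enorm_eq_nnnorm, ← ofReal_norm]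
    exact ENNReal.ofReal_le_ofReal (h k)
  calc ENNReal.ofReal r = (ENNReal.ofReal r ^ k) ^ (1 / (k : ℝ)) := by
        rw [← ENNReal.rpow_natCast, ← ENNReal.rpow_mul, mul_one_div_cancel (by positivity),
          ENNReal.rpow_one]
    _ ≤ _ := ENNReal.rpow_le_rpow hpow (by positivity)

section

variable {n : ℕ}

namespace Matrix

theorem sum_mul_apply (M N : Matrix (Fin n) (Fin n) ℝ) (i : Fin n) :
    ∑ j, (M * N) i j = ∑ l, M i l * ∑ j, N l j := by
  simp only [mul_apply, Finset.mul_sum]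
  exact Finset.sum_comm

theorem pow_le_sum_pow_apply {M : Matrix (Fin n) (Fin n) ℝ} (hM : ∀ i j, 0 ≤ M i j) {r : ℝ}
    (hr : 0 ≤ r) (h : ∀ i, r ≤ ∑ j, M i j) (k : ℕ) (i : Fin n) :
    r ^ k ≤ ∑ j, (M ^ k) i j := by
  induction k generalizing i with
  | zero => simp [one_apply]
  | succ k ih =>
    calc r ^ (k + 1) = r ^ k * r := pow_succ r k
      _ ≤ r ^ k * ∑ l, M i l := mul_le_mul_of_nonneg_left (h i) (by positivity)
      _ = ∑ l, M i l * r ^ k := by rw [Finset.mul_sum]; simp only [mul_comm]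
      _ ≤ ∑ l, M i l * ∑ j, (M ^ k) l j :=
        Finset.sum_le_sum fun l _ => mul_le_mul_of_nonneg_left (ih l) (hM i l)
      _ = ∑ j, (M ^ (k + 1)) i j := by rw [pow_succ', sum_mul_apply]

theorem sum_le_norm_map_ofReal (M : Matrix (Fin n) (Fin n) ℝ) (i : Fin n) :
    ∑ j, M i j ≤ ‖M.map Complex.ofReal‖ := by
  rw [← coe_nnnorm, linfty_opNNNorm_def]
  calc ∑ j, M i j ≤ ∑ j, ‖M.map Complex.ofReal i j‖₊ := by
        push_cast
        exact Finset.sum_le_sum fun j _ => by simpa using le_abs_self (M i j)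
    _ ≤ _ := NNReal.coe_le_coe.mpr
        (Finset.le_sup (f := fun i => ∑ j, ‖M.map Complex.ofReal i j‖₊) (Finset.mem_univ i))

theorem norm_map_ofReal_le_of_sum_le {M : Matrix (Fin n) (Fin n) ℝ}
    (hM : ∀ i j, 0 ≤ M i j) {r : ℝ} (hr : 0 ≤ r) (h : ∀ i, ∑ j, M i j ≤ r) :
    ‖M.map Complex.ofReal‖ ≤ r := by
  have hsum : ∀ i, ∑ j, ‖M.map Complex.ofReal i j‖₊ = (∑ j, M i j).toNNReal := fun i => by
    rw [Real.toNNReal_sum_of_nonneg fun j _ => hM i j]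
    exact Finset.sum_congr rfl fun j _ => by simp [← NNReal.coe_inj, abs_of_nonneg, hM i j]
  rw [← coe_nnnorm, linfty_opNNNorm_def, ← Real.le_toNNReal_iff_coe_le hr]
  exact Finset.sup_le fun i _ => (hsum i).trans_le (Real.toNNReal_le_toNNReal (h i))

theorem map_ofReal_pow (M : Matrix (Fin n) (Fin n) ℝ) (k : ℕ) :
    (M ^ k).map Complex.ofReal = M.map Complex.ofReal ^ k :=
  (RingHom.mapMatrix Complex.ofRealHom).map_pow M k

end Matrix

theorem specRad_nonneg (M : Matrix (Fin n) (Fin n) ℝ) : 0 ≤ specRad M :=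
  Real.sSup_nonneg (by rintro x ⟨μ, -, rfl⟩; exact norm_nonneg μ)

theorem specRad_le_of_sum_le [NeZero n] {M : Matrix (Fin n) (Fin n) ℝ}
    (hM : ∀ i j, 0 ≤ M i j) {r : ℝ} (hr : 0 ≤ r) (h : ∀ i, ∑ j, M i j ≤ r) :
    specRad M ≤ r := by
  refine Real.sSup_le ?_ hr
  rintro x ⟨μ, hμ, rfl⟩
  exact (spectrum.norm_le_norm_of_mem hμ).trans (norm_map_ofReal_le_of_sum_le hM hr h)

theorem norm_le_specRad [NeZero n] {M : Matrix (Fin n) (Fin n) ℝ} {μ : ℂ}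
    (hμ : μ ∈ spectrum ℂ (M.map Complex.ofReal)) : ‖μ‖ ≤ specRad M :=
  le_csSup ⟨‖M.map Complex.ofReal‖, by
    rintro x ⟨ν, hν, rfl⟩; exact spectrum.norm_le_norm_of_mem hν⟩ ⟨μ, hμ, rfl⟩

theorem spectralRadius_le_ofReal_specRad [NeZero n] (M : Matrix (Fin n) (Fin n) ℝ) :
    spectralRadius ℂ (M.map Complex.ofReal) ≤ ENNReal.ofReal (specRad M) :=
  iSup₂_le fun μ hμ => by
    rw [← enorm_eq_nnnorm, ← ofReal_norm]
    exact ENNReal.ofReal_le_ofReal (norm_le_specRad hμ)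

theorem le_specRad_of_le_sum [NeZero n] {M : Matrix (Fin n) (Fin n) ℝ}
    (hM : ∀ i j, 0 ≤ M i j) {r : ℝ} (h : ∀ i, r ≤ ∑ j, M i j) : r ≤ specRad M := by
  rcases le_or_gt r 0 with hr | hr
  · exact hr.trans (specRad_nonneg M)
  have hpow : ∀ k : ℕ, r ^ k ≤ ‖M.map Complex.ofReal ^ k‖ := fun k => by
    rw [← map_ofReal_pow]
    exact (pow_le_sum_pow_apply hM hr.le h k 0).trans (sum_le_norm_map_ofReal _ 0)
  rw [← ENNReal.ofReal_le_ofReal_iff (specRad_nonneg M)]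
  exact (ofReal_le_spectralRadius_of_pow_le_norm_pow hr.le hpow).trans
    (spectralRadius_le_ofReal_specRad M)

theorem specRad_diagonal_conj (M : Matrix (Fin n) (Fin n) ℝ) {w : Fin n → ℝ}
    (hw : ∀ i, w i ≠ 0) : specRad (of fun i j => (w i)⁻¹ * M i j * w j) = specRad M := by
  have hwc : ∀ i, (w i : ℂ) ≠ 0 := fun i => Complex.ofReal_ne_zero.mpr (hw i)
  let u : (Matrix (Fin n) (Fin n) ℂ)ˣ :=
    { val := diagonal fun i => ((w i : ℂ))⁻¹
      inv := diagonal fun i => (w i : ℂ)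
      val_inv := by simp [diagonal_mul_diagonal, hwc]
      inv_val := by simp [diagonal_mul_diagonal, hwc] }
  have hconj : (of fun i j => (w i)⁻¹ * M i j * w j).map Complex.ofReal
      = u * M.map Complex.ofReal * (u⁻¹ : _ˣ) := by
    ext i j
    simp [u, mul_apply, diagonal]
  rw [specRad, hconj, spectrum.units_conjugate, specRad]

theorem sum_diagonal_conj_apply (M : Matrix (Fin n) (Fin n) ℝ) (w : Fin n → ℝ) (i : Fin n) :
    ∑ j, (w i)⁻¹ * M i j * w j = (w i)⁻¹ * (M *ᵥ w) i := by
  simp only [mulVec, dotProduct, Finset.mul_sum, mul_assoc]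

theorem specRad_le_of_mulVec_le [NeZero n] {M : Matrix (Fin n) (Fin n) ℝ}
    (hM : ∀ i j, 0 ≤ M i j) {w : Fin n → ℝ} (hw : ∀ i, 0 < w i) {r : ℝ} (hr : 0 ≤ r)
    (h : ∀ i, (M *ᵥ w) i ≤ r * w i) : specRad M ≤ r := by
  rw [← specRad_diagonal_conj M fun i => (hw i).ne']
  refine specRad_le_of_sum_le (fun i j => ?_) hr fun i => ?_
  · exact mul_nonneg (mul_nonneg (inv_nonneg.2 (hw i).le) (hM i j)) (hw j).le
  · simp only [of_apply]
    rw [sum_diagonal_conj_apply, inv_mul_le_iff₀ (hw i), mul_comm]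
    exact h i

theorem le_specRad_of_le_mulVec [NeZero n] {M : Matrix (Fin n) (Fin n) ℝ}
    (hM : ∀ i j, 0 ≤ M i j) {w : Fin n → ℝ} (hw : ∀ i, 0 < w i) {r : ℝ}
    (h : ∀ i, r * w i ≤ (M *ᵥ w) i) : r ≤ specRad M := by
  rw [← specRad_diagonal_conj M fun i => (hw i).ne']
  refine le_specRad_of_le_sum (fun i j => ?_) fun i => ?_
  · exact mul_nonneg (mul_nonneg (inv_nonneg.2 (hw i).le) (hM i j)) (hw j).le
  · simp only [of_apply]
    rw [sum_diagonal_conj_apply, le_inv_mul_iff₀ (hw i), mul_comm]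
    exact h i

theorem lt_specRad_of_le_mulVec [NeZero n] {M : Matrix (Fin n) (Fin n) ℝ}
    (hM : ∀ i j, 0 < M i j) {w : Fin n → ℝ} (hw : ∀ i, 0 < w i) {r : ℝ}
    (h : ∀ i, r * w i ≤ (M *ᵥ w) i) (hlt : ∃ i, r * w i < (M *ᵥ w) i) : r < specRad M := by
  obtain ⟨i₀, hi₀⟩ := hlt
  set u := M *ᵥ w
  have hu : ∀ i, 0 < u i := fun i =>
    Finset.sum_pos (fun j _ => mul_pos (hM i j) (hw j)) Finset.univ_nonempty
  have hMu : ∀ i, r * u i < (M *ᵥ u) i := fun i => by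
    calc r * u i = ∑ j, M i j * (r * w j) := by
          simp only [u, mulVec, dotProduct, Finset.mul_sum]; ring_nf
      _ < ∑ j, M i j * u j :=
          Finset.sum_lt_sum (fun j _ => mul_le_mul_of_nonneg_left (h j) (hM i j).le)
            ⟨i₀, Finset.mem_univ _, mul_lt_mul_of_pos_left hi₀ (hM i i₀)⟩
  obtain ⟨i₁, hi₁⟩ := Finite.exists_min fun i => (M *ᵥ u) i / u i
  calc r < (M *ᵥ u) i₁ / u i₁ := (lt_div_iff₀ (hu i₁)).2 (hMu i₁)
    _ ≤ specRad M := le_specRad_of_le_mulVec (fun i j => (hM i j).le) hu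
          fun i => (le_div_iff₀ (hu i)).1 (hi₁ i)

noncomputable def rowGeomMean (A : Matrix (Fin n) (Fin n) ℝ) (i : Fin n) : ℝ :=
  Real.exp ((∑ k, Real.log (A i k)) / n)

theorem rowGeomMean_pos (A : Matrix (Fin n) (Fin n) ℝ) (i : Fin n) : 0 < rowGeomMean A i :=
  Real.exp_pos _

theorem IsConsistent.of_eq_div {A : Matrix (Fin n) (Fin n) ℝ} {w : Fin n → ℝ}
    (hw : ∀ i, w i ≠ 0) (hA : ∀ i j, A i j = w i / w j) : IsConsistent A := by
  intro i j k
  rw [hA, hA, hA]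
  field_simp [hw j]

theorem IsConsistent.mulVec_col_apply {A : Matrix (Fin n) (Fin n) ℝ} (hc : IsConsistent A)
    (k i : Fin n) : (A *ᵥ fun j => A j k) i = n * A i k := by
  simp [mulVec, dotProduct, ← hc i _ k]

namespace IsPCM

variable {A : Matrix (Fin n) (Fin n) ℝ}

theorem sum_sum_log_eq_zero (hA : IsPCM A) : ∑ i, ∑ j, Real.log (A i j) = 0 := by
  have hanti : ∀ i j, Real.log (A i j) + Real.log (A j i) = 0 := fun i j => by
    rw [← Real.log_mul (hA.1 i j).ne' (hA.1 j i).ne', hA.2, Real.log_one]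
  have : ∑ i, ∑ j, Real.log (A i j) + ∑ i, ∑ j, Real.log (A j i) = 0 := by
    simp only [← Finset.sum_add_distrib, hanti, Finset.sum_const_zero]
  rw [Finset.sum_comm (f := fun i j => Real.log (A j i))] at this
  linarith

theorem diagonal_conj_rowGeomMean_pos (hA : IsPCM A) (i j : Fin n) :
    0 < (rowGeomMean A i)⁻¹ * A i j * rowGeomMean A j := by
  have := rowGeomMean_pos A i; have := rowGeomMean_pos A j; have := hA.1 i j
  positivity

theorem sum_log_diagonal_conj_rowGeomMean [NeZero n] (hA : IsPCM A) (i : Fin n) :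
    ∑ j, Real.log ((rowGeomMean A i)⁻¹ * A i j * rowGeomMean A j) = 0 := by
  set s : Fin n → ℝ := fun i => ∑ k, Real.log (A i k)
  have hlog : ∀ j, Real.log ((rowGeomMean A i)⁻¹ * A i j * rowGeomMean A j)
      = Real.log (A i j) - s i / n + s j / n := fun j => by
    rw [Real.log_mul (mul_ne_zero (inv_ne_zero (rowGeomMean_pos A i).ne') (hA.1 i j).ne')
        (rowGeomMean_pos A j).ne',
      Real.log_mul (inv_ne_zero (rowGeomMean_pos A i).ne') (hA.1 i j).ne', Real.log_inv,
      rowGeomMean, rowGeomMean, Real.log_exp, Real.log_exp]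
    ring
  simp only [hlog, Finset.sum_add_distrib, Finset.sum_sub_distrib, Finset.sum_const,
    Finset.card_univ, Fintype.card_fin, nsmul_eq_mul, ← Finset.sum_div, s,
    hA.sum_sum_log_eq_zero]
  field_simp [NeZero.ne (n : ℝ)]
  ring

theorem card_mul_le_mulVec_rowGeomMean [NeZero n] (hA : IsPCM A) (i : Fin n) :
    n * rowGeomMean A i ≤ (A *ᵥ rowGeomMean A) i := by
  have := card_le_sum_of_sum_log_eq_zero (hA.diagonal_conj_rowGeomMean_pos i)
    (hA.sum_log_diagonal_conj_rowGeomMean i)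
  rwa [Fintype.card_fin, sum_diagonal_conj_apply, le_inv_mul_iff₀ (rowGeomMean_pos A i),
    mul_comm] at this

theorem exists_mul_lt_mulVec_rowGeomMean [NeZero n] (hA : IsPCM A) (hc : ¬IsConsistent A) :
    ∃ i, n * rowGeomMean A i < (A *ᵥ rowGeomMean A) i := by
  obtain ⟨i, j, hij⟩ : ∃ i j, (rowGeomMean A i)⁻¹ * A i j * rowGeomMean A j ≠ 1 := by
    by_contra! h
    refine hc (IsConsistent.of_eq_div (fun i => (rowGeomMean_pos A i).ne') fun i j => ?_)
    have hij := h i j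
    rw [mul_assoc, inv_mul_eq_one₀ (rowGeomMean_pos A i).ne'] at hij
    rw [eq_div_iff (rowGeomMean_pos A j).ne', hij]
  have := card_lt_sum_of_sum_log_eq_zero (hA.diagonal_conj_rowGeomMean_pos i)
    (hA.sum_log_diagonal_conj_rowGeomMean i) ⟨j, hij⟩
  rw [Fintype.card_fin, sum_diagonal_conj_apply, lt_inv_mul_iff₀ (rowGeomMean_pos A i),
    mul_comm] at this
  exact ⟨i, this⟩

end IsPCM

end

/-- For an `n × n` pairwise comparison matrix `A` (`n ≥ 1`), the spectral radius
satisfies `ρ(A) ≥ n`, with equality exactly when `A` is consistent; consequently,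
for `n ≥ 2`, Saaty's Consistency Index `CI(A) = (ρ(A) − n)/(n − 1)` is nonnegative
and vanishes exactly on consistent matrices. -/
theorem specRad_ge_and_CI_nonneg {n : ℕ} (hn : 1 ≤ n)
    (A : Matrix (Fin n) (Fin n) ℝ) (hA : IsPCM A) :
    (n : ℝ) ≤ specRad A ∧
      (specRad A = n ↔ IsConsistent A) ∧
      (2 ≤ n →
        0 ≤ (specRad A - n) / ((n : ℝ) - 1) ∧
          ((specRad A - n) / ((n : ℝ) - 1) = 0 ↔ IsConsistent A)) := by
  have : NeZero n := ⟨by omega⟩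
  have hAnonneg : ∀ i j, 0 ≤ A i j := fun i j => (hA.1 i j).le
  have hge : (n : ℝ) ≤ specRad A :=
    le_specRad_of_le_mulVec hAnonneg (rowGeomMean_pos A) hA.card_mul_le_mulVec_rowGeomMean
  have hiff : specRad A = n ↔ IsConsistent A := by
    refine ⟨fun h => by_contra fun hc => ?_, fun hc => le_antisymm ?_ hge⟩
    · exact (lt_specRad_of_le_mulVec hA.1 (rowGeomMean_pos A)
        hA.card_mul_le_mulVec_rowGeomMean (hA.exists_mul_lt_mulVec_rowGeomMean hc)).ne' h
    · exact specRad_le_of_mulVec_le hAnonneg (fun i => hA.1 i 0) (Nat.cast_nonneg n)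
        fun i => (hc.mulVec_col_apply 0 i).le
  refine ⟨hge, hiff, fun hn₂ => ?_⟩
  have hden : (0 : ℝ) < n - 1 := by
    have : (2 : ℝ) ≤ n := by exact_mod_cast hn₂
    linarith
  rw [div_eq_zero_iff, sub_eq_zero, or_iff_left hden.ne']
  exact ⟨div_nonneg (sub_nonneg.2 hge) hden.le, hiff⟩
end

section
/- Fix x > 0 and for each n ≥ 3 let A_KS^{(n)}(x) be the n×n pairwise comparison matrix whose (1, n) entry is x, whose (n, 1) entry is 1/x, and all of whose remaining entries equal 1. Then K(A_KS^{(n)}(x)) = min(|1 − x|, |1 − 1/x|) for every n ≥ 3; in particular K(A_KS^{(n)}(x)) does not depend on n, and K(A_KS^{(n)}(2)) = 1/2 for all n ≥ 3. -/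
/-- The Koczkodaj–Szwarc matrix of order `n`: entry `(1, n)` equals `x`, entry
`(n, 1)` equals `1/x`, and all remaining entries equal `1`. -/
noncomputable def AKS (n : ℕ) (x : ℝ) : Matrix (Fin n) (Fin n) ℝ :=
  fun i j =>
    if i.val = 0 ∧ j.val = n - 1 ∧ i ≠ j then x
    else if i.val = n - 1 ∧ j.val = 0 ∧ i ≠ j then 1 / x
    else 1

lemma AKS_lt (x : ℝ) {n : ℕ} (hn : 3 ≤ n) {i j : Fin n} (hij : i < j) :
    AKS n x i j = if i.val = 0 ∧ j.val = n - 1 then x else 1 := by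
  have hv : i.val < j.val := hij
  have hne : i ≠ j := Fin.ne_of_lt hij
  unfold AKS
  by_cases h : i.val = 0 ∧ j.val = n - 1
  · rw [if_pos ⟨h.1, h.2, hne⟩, if_pos h]
  · rw [if_neg (by rintro ⟨ha, hb, -⟩; exact h ⟨ha, hb⟩),
      if_neg (by rintro ⟨ha, hb, -⟩; omega), if_neg h]

lemma Kindex_AKS_aux (x : ℝ) (n : ℕ) (hn : 3 ≤ n) :
    Kindex (AKS n x) = min |1 - x| |1 - 1 / x| := by
  set M := min |1 - x| |1 - 1 / x| with hM
  have hM0 : 0 ≤ M := le_min (abs_nonneg _) (abs_nonneg _)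
  have hphi1 : phi 1 1 1 = 0 := by simp [phi]
  have hphix : phi 1 1 x = M := by rw [hM]; simp [phi, one_div]
  have key : ∀ t : {p : Fin n × Fin n × Fin n // p.1 < p.2.1 ∧ p.2.1 < p.2.2},
      phi (AKS n x t.1.1 t.1.2.1) (AKS n x t.1.2.1 t.1.2.2) (AKS n x t.1.1 t.1.2.2)
        = if t.1.1.val = 0 ∧ t.1.2.2.val = n - 1 then M else 0 := by
    rintro ⟨⟨i, j, k⟩, hij, hjk⟩
    have hik : i < k := hij.trans hjk
    have h1 : i.val < j.val := hij
    have h2 : j.val < k.val := hjk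
    have hkn : k.val < n := k.isLt
    simp only
    rw [AKS_lt x hn hij, AKS_lt x hn hjk, AKS_lt x hn hik]
    by_cases h : i.val = 0 ∧ k.val = n - 1
    · rw [if_pos h, if_pos h, if_neg (by omega), if_neg (by omega)]
      exact hphix
    · rw [if_neg h, if_neg h, if_neg (by omega), if_neg (by omega)]
      exact hphi1
  have hBdd : BddAbove (Set.range fun t : {p : Fin n × Fin n × Fin n // p.1 < p.2.1 ∧ p.2.1 < p.2.2} =>
      phi (AKS n x t.1.1 t.1.2.1) (AKS n x t.1.2.1 t.1.2.2) (AKS n x t.1.1 t.1.2.2)) := by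
    refine ⟨M, ?_⟩
    rintro y ⟨t, rfl⟩
    dsimp only
    rw [key t]
    split
    · exact le_rfl
    · exact hM0
  let t0 : {p : Fin n × Fin n × Fin n // p.1 < p.2.1 ∧ p.2.1 < p.2.2} :=
    ⟨(⟨0, by omega⟩, ⟨1, by omega⟩, ⟨n - 1, by omega⟩),
      by refine ⟨?_, ?_⟩ <;> simp [Fin.lt_def] <;> omega⟩
  haveI : Nonempty {p : Fin n × Fin n × Fin n // p.1 < p.2.1 ∧ p.2.1 < p.2.2} := ⟨t0⟩
  unfold Kindex
  apply le_antisymm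
  · refine ciSup_le fun t => ?_
    rw [key t]
    split
    · exact le_rfl
    · exact hM0
  · have h := le_ciSup hBdd t0
    rw [key t0] at h
    simpa [t0] using h

/-- For every `x > 0` and `n ≥ 3`, `K(A_KS^{(n)}(x)) = min(|1 − x|, |1 − 1/x|)`;
in particular `K` of this family does not depend on `n`, and
`K(A_KS^{(n)}(2)) = 1/2` for all `n ≥ 3`. -/
theorem Kindex_AKS (x : ℝ) (hx : 0 < x) :
    (∀ n : ℕ, 3 ≤ n → Kindex (AKS n x) = min |1 - x| |1 - 1 / x|) ∧
      (∀ n : ℕ, 3 ≤ n → Kindex (AKS n 2) = 1 / 2) := by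
  constructor
  · intro n hn; exact Kindex_AKS_aux x n hn
  · intro n hn
    rw [Kindex_AKS_aux 2 n hn]
    norm_num [abs_of_pos]
end

section
/- For every n ≥ 4 there exists an n×n pairwise comparison matrix A and a modified matrix A′ obtained from A by changing a single off-diagonal entry a_ij (and its reciprocal a_ji) such that exactly one of the n − 2 triads containing the pair {i, j} has strictly larger φ-value in A′ than in A, while the other n − 3 triads containing {i, j} all have strictly smaller φ-value in A′ than in A (and all triads not containing {i, j} are unchanged). -/
/-- The `φ`-value of the triad indexed by a three-element subset `{i, j, k}`
(with `i < j < k`): `φ(a_ij, a_jk, a_ik)`. (Defaults to `0` on sets that are not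
three-element.) -/
noncomputable def triadPhi {n : ℕ} (A : Matrix (Fin n) (Fin n) ℝ)
    (s : Finset (Fin n)) : ℝ :=
  match s.sort (· ≤ ·) with
  | [i, j, k] => phi (A i j) (A j k) (A i k)
  | _ => 0

theorem Finset.sort_triple_of_lt {α : Type*} [LinearOrder α] {i j k : α} (hij : i < j)
    (hjk : j < k) : ({i, j, k} : Finset α).sort (· ≤ ·) = [i, j, k] := by
  rw [Finset.sort_insert, Finset.sort_insert, Finset.sort_singleton] <;>
    simp [hjk.le, hij.le, (hij.trans hjk).le, hij.ne, hjk.ne, (hij.trans hjk).ne]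

section TriadPhi

variable {n : ℕ}

theorem triadPhi_triple (A : Matrix (Fin n) (Fin n) ℝ) {i j k : Fin n} (hij : i < j)
    (hjk : j < k) : triadPhi A {i, j, k} = phi (A i j) (A j k) (A i k) := by
  rw [triadPhi, Finset.sort_triple_of_lt hij hjk]

theorem triadPhi_congr {A B : Matrix (Fin n) (Fin n) ℝ} {s : Finset (Fin n)}
    (h : ∀ p ∈ s, ∀ q ∈ s, A p q = B p q) : triadPhi A s = triadPhi B s := by
  unfold triadPhi
  have hmem : ∀ x ∈ s.sort (· ≤ ·), x ∈ s := fun x hx => (Finset.mem_sort _).1 hx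
  split
  next i j k hs =>
    rw [hs] at hmem
    simp only [List.mem_cons, List.not_mem_nil, or_false, forall_eq_or_imp, forall_eq] at hmem
    obtain ⟨hi, hj, hk⟩ := hmem
    rw [h i hi j hj, h j hj k hk, h i hi k hk]
  next => rfl

end TriadPhi

section UpdateReciprocal

variable {n : ℕ} (A : Matrix (Fin n) (Fin n) ℝ) (i j : Fin n) (x : ℝ)

noncomputable def updateReciprocal : Matrix (Fin n) (Fin n) ℝ := fun p q =>
  if p = i ∧ q = j then x else if p = j ∧ q = i then x⁻¹ else A p q

variable {i j}

theorem updateReciprocal_apply_of_ne {p q : Fin n} (hij : ¬(p = i ∧ q = j))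
    (hji : ¬(p = j ∧ q = i)) : updateReciprocal A i j x p q = A p q := by
  simp only [updateReciprocal, if_neg hij, if_neg hji]

theorem updateReciprocal_apply_self : updateReciprocal A i j x i j = x := by
  simp [updateReciprocal]

variable {A x}

theorem IsPCM.updateReciprocal (hA : IsPCM A) (hij : i ≠ j) (hx : 0 < x) :
    IsPCM (updateReciprocal A i j x) := by
  refine ⟨fun p q => ?_, fun p q => ?_⟩ <;> unfold _root_.updateReciprocal
  · split_ifs
    exacts [hx, inv_pos.2 hx, hA.1 p q]
  · by_cases h : p = i ∧ q = j
    · simp [h, hij, hx.ne']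
    by_cases h' : p = j ∧ q = i
    · simp [h', hij, hx.ne']
    rw [if_neg h, if_neg h', if_neg (by tauto), if_neg (by tauto)]
    exact hA.2 p q

theorem triadPhi_updateReciprocal_of_not_mem {s : Finset (Fin n)} (hs : ¬(i ∈ s ∧ j ∈ s)) :
    triadPhi (updateReciprocal A i j x) s = triadPhi A s :=
  triadPhi_congr fun p hp q hq => updateReciprocal_apply_of_ne A x
    (by rintro ⟨rfl, rfl⟩; exact hs ⟨hp, hq⟩) (by rintro ⟨rfl, rfl⟩; exact hs ⟨hq, hp⟩)

theorem triadPhi_updateReciprocal_triple {k : Fin n} (hij : i < j) (hjk : j < k) :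
    triadPhi (updateReciprocal A i j x) {i, j, k} = phi x (A j k) (A i k) := by
  rw [triadPhi_triple _ hij hjk, updateReciprocal_apply_self,
    updateReciprocal_apply_of_ne A x (by grind) (by grind),
    updateReciprocal_apply_of_ne A x (by grind) (by grind)]

end UpdateReciprocal

theorem isPCM_ones (n : ℕ) : IsPCM (Matrix.of fun _ _ : Fin n => (1 : ℝ)) :=
  ⟨fun _ _ => one_pos, fun _ _ => mul_one 1⟩

/-- For every `n ≥ 4` there is an `n × n` pairwise comparison matrix `A` and a matrix
`A′` obtained from `A` by changing the single off-diagonal entry `a_ij` (and its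
reciprocal) such that exactly one of the `n − 2` triads containing the pair `{i, j}`
has strictly larger `φ`-value in `A′`, while the remaining `n − 3` such triads all have
strictly smaller `φ`-value, and all triads not containing `{i, j}` are unchanged. -/
theorem single_entry_change_worsens_one_triad_improves_rest (n : ℕ) (hn : 4 ≤ n) :
    ∃ (A A' : Matrix (Fin n) (Fin n) ℝ) (i j : Fin n),
      IsPCM A ∧ IsPCM A' ∧ i ≠ j ∧
      A' i j ≠ A i j ∧
      (∀ p q : Fin n, ¬(p = i ∧ q = j) → ¬(p = j ∧ q = i) → A' p q = A p q) ∧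
      (∃ k₀ : Fin n, k₀ ≠ i ∧ k₀ ≠ j ∧
        triadPhi A {i, j, k₀} < triadPhi A' {i, j, k₀} ∧
        ∀ k : Fin n, k ≠ i → k ≠ j → k ≠ k₀ →
          triadPhi A' {i, j, k} < triadPhi A {i, j, k}) ∧
      (∀ s : Finset (Fin n), s.card = 3 → ¬(i ∈ s ∧ j ∈ s) →
        triadPhi A' s = triadPhi A s) := by
  let i : Fin n := ⟨0, by omega⟩
  let j : Fin n := ⟨1, by omega⟩
  let k : Fin n := ⟨2, by omega⟩
  have hij : i < j := Fin.mk_lt_mk.2 zero_lt_one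
  have hjk : j < k := Fin.mk_lt_mk.2 one_lt_two
  have hj_lt : ∀ l : Fin n, l ≠ i → l ≠ j → j < l := by
    intro l
    simp only [ne_eq, Fin.ext_iff, Fin.lt_def, i, j]
    omega
  let B := updateReciprocal (Matrix.of fun _ _ : Fin n => (1 : ℝ)) i k 4
  have hB : IsPCM B := (isPCM_ones n).updateReciprocal (hij.trans hjk).ne four_pos
  have hB_ik : B i k = 4 := updateReciprocal_apply_self _ _
  have hB_j : ∀ l, B j l = 1 := fun l =>
    updateReciprocal_apply_of_ne _ _ (fun h => hij.ne' h.1) (fun h => hjk.ne h.1)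
  have hB_i : ∀ l, l ≠ k → B i l = 1 := fun l hl =>
    updateReciprocal_apply_of_ne _ _ (fun h => hl h.2) (fun h => (hij.trans hjk).ne h.1)
  refine ⟨updateReciprocal B i j 2, updateReciprocal B i j 1, i, j,
    hB.updateReciprocal hij.ne two_pos, hB.updateReciprocal hij.ne one_pos, hij.ne, ?_,
    fun p q hp hq => ?_, ⟨k, (hij.trans hjk).ne', hjk.ne', ?_, fun l hli hlj hlk => ?_⟩,
    fun s _ hs => ?_⟩
  · norm_num [updateReciprocal_apply_self]
  · rw [updateReciprocal_apply_of_ne _ _ hp hq, updateReciprocal_apply_of_ne _ _ hp hq]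
  · rw [triadPhi_updateReciprocal_triple hij hjk, triadPhi_updateReciprocal_triple hij hjk,
      hB_j, hB_ik]
    norm_num [phi]
  · rw [triadPhi_updateReciprocal_triple hij (hj_lt l hli hlj),
      triadPhi_updateReciprocal_triple hij (hj_lt l hli hlj), hB_j, hB_i l hlk]
    norm_num [phi]
  · rw [triadPhi_updateReciprocal_of_not_mem hs, triadPhi_updateReciprocal_of_not_mem hs]
end
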